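/- arXiv:1705.03356 — 5 statements merged into one kernel-verified Lean document; each statement's English description precedes it below -/
import Mathlib

section
/- If t/f(t) has nonnegative coefficients and some coefficient a_k of z^k in t/f(t) is strictly positive, then for every n ≥ 0 the coefficient π_{kn+1}/(kn)! of the compositional inverse f^{[-1]} satisfies π_{kn+1} ≥ (kn)! · binomial(kn+1, n) · a_k^n > 0. -/
/-!
Since `f(0) = 0` and `f'(0) = 1`, the series `u = t/f(t)` has constant term `1`; with nonnegative
coefficients this gives `u ≥ 1 + a_k t^k` coefficientwise when `k ≥ 1` (for `k = 0` the claim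
reduces to `π_1 = 1`). Powers of series with nonnegative
coefficients are monotone coefficientwise, so `[t^{kn}] u^{kn+1}` is at least
`[t^{kn}] (1 + a_k t^k)^{kn+1} = binomial(kn+1, n) · a_k^n`.
-/

open PowerSeries Finset

namespace PowerSeries

section OrderedCoeff

variable {R : Type*} [Semiring R] [PartialOrder R] [IsOrderedRing R]

theorem coeff_pow_nonneg {u : R⟦X⟧} (hu : ∀ n, 0 ≤ coeff n u) (m n : ℕ) :
    0 ≤ coeff n (u ^ m) := by
  induction m generalizing n with
  | zero => rw [pow_zero, coeff_one]; split_ifs <;> simp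
  | succ m ih =>
    rw [pow_succ, coeff_mul]
    exact sum_nonneg fun p _ => mul_nonneg (ih p.1) (hu p.2)

theorem coeff_pow_le_coeff_pow {u v : R⟦X⟧} (hv : ∀ n, 0 ≤ coeff n v)
    (hvu : ∀ n, coeff n v ≤ coeff n u) (m n : ℕ) :
    coeff n (v ^ m) ≤ coeff n (u ^ m) := by
  induction m generalizing n with
  | zero => rfl
  | succ m ih =>
    rw [pow_succ, pow_succ, coeff_mul, coeff_mul]
    exact sum_le_sum fun p _ => mul_le_mul (ih p.1) (hvu p.2) (hv p.2)
      (coeff_pow_nonneg (fun j => (hv j).trans (hvu j)) m p.1)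

end OrderedCoeff

theorem coeff_one_add_C_mul_X_pow_pow {R : Type*} [CommSemiring R] (a : R) {k : ℕ}
    (hk : 0 < k) (m n : ℕ) :
    coeff (k * n) ((1 + C a * X ^ k) ^ m) = m.choose n * a ^ n := by
  have hterm : ∀ i, (C a * X ^ k) ^ i * 1 ^ (m - i) * (m.choose i : R⟦X⟧) =
      C (m.choose i * a ^ i) * X ^ (k * i) := by
    intro i
    rw [one_pow, mul_one, mul_pow, ← map_pow, ← pow_mul, ← map_natCast C, mul_comm,
      ← mul_assoc, ← map_mul]
  rw [add_comm, add_pow, map_sum, sum_eq_single n]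
  · rw [hterm, coeff_C_mul_X_pow, if_pos rfl]
  · intro i _ hin
    rw [hterm, coeff_C_mul_X_pow, if_neg]
    exact fun h => hin (Nat.eq_of_mul_eq_mul_left hk h).symm
  · intro hn
    rw [hterm, coeff_C_mul_X_pow, if_pos rfl,
      Nat.choose_eq_zero_of_lt (by simpa [Nat.lt_succ_iff] using hn), Nat.cast_zero, zero_mul]

theorem choose_mul_coeff_pow_le_coeff_pow {R : Type*} [CommSemiring R] [PartialOrder R]
    [IsOrderedRing R] {u : R⟦X⟧} (hu : ∀ n, 0 ≤ coeff n u) (hu0 : coeff 0 u = 1) {k : ℕ}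
    (hk : 0 < k) (m n : ℕ) :
    m.choose n * coeff k u ^ n ≤ coeff (k * n) (u ^ m) := by
  set v : R⟦X⟧ := 1 + C (coeff k u) * X ^ k
  have hv : ∀ j, coeff j v = (if j = 0 then 1 else 0) + (if j = k then coeff k u else 0) := by
    intro j
    simp only [v, map_add, coeff_one, coeff_C_mul_X_pow]
  have hv_nonneg : ∀ j, 0 ≤ coeff j v := by
    intro j
    rw [hv]
    exact add_nonneg (by split_ifs <;> simp) (by split_ifs <;> simp [hu])
  have hv_le : ∀ j, coeff j v ≤ coeff j u := by
    intro j
    rw [hv]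
    rcases eq_or_ne j 0 with rfl | hj0
    · simp [hk.ne, hu0]
    · rcases eq_or_ne j k with rfl | hjk
      · simp [hj0]
      · simp [hj0, hjk, hu j]
  rw [← coeff_one_add_C_mul_X_pow_pow _ hk]
  exact coeff_pow_le_coeff_pow hv_nonneg hv_le m (k * n)

theorem coeff_zero_eq_one_of_mul_eq_X {R : Type*} [Semiring R] {f u : R⟦X⟧}
    (hf0 : constantCoeff f = 0) (hf1 : coeff 1 f = 1) (hu : f * u = X) : coeff 0 u = 1 := by
  have h := congrArg (coeff 1) hu
  rw [coeff_mul, Finset.Nat.antidiagonal_succ, sum_cons, Finset.Nat.antidiagonal_zero,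
    sum_map, sum_singleton] at h
  simpa [coeff_zero_eq_constantCoeff_apply, hf0, hf1] using h

end PowerSeries

/-- Let `f` be a power series with `f(0) = 0`, `f'(0) = 1`, such that
`u = t/f(t)` (the series with `f·u = t`) has nonnegative coefficients, and let
`π_n = (n-1)! · [t^{n-1}] u^n` (the value at `0` of the `(n-1)`-st derivative of
`(t/f(t))^n`, which by Lagrange inversion equals `n!` times the `n`-th coefficient of
the compositional inverse `f^{[-1]}`). If the coefficient `a_k` of `z^k` in `u` is
strictly positive, then for every `n ≥ 0`,
`π_{kn+1} ≥ (kn)! · binomial(kn+1, n) · a_k^n > 0`. -/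
theorem lagrange_coefficient_lower_bound (f u : PowerSeries ℝ)
    (hf0 : constantCoeff f = 0) (hf1 : coeff 1 f = 1)
    (hu : f * u = X) (hupos : ∀ n, 0 ≤ coeff n u)
    (π : ℕ → ℝ) (hπ : ∀ n, 1 ≤ n → π n = (n - 1).factorial * coeff (n - 1) (u ^ n))
    (k : ℕ) (hk : 0 < coeff k u) :
    ∀ n : ℕ,
      ((k * n).factorial : ℝ) * ((k * n + 1).choose n) * (coeff k u) ^ n ≤ π (k * n + 1)
      ∧ 0 < π (k * n + 1) := by
  intro n
  have hu0 : coeff 0 u = 1 := coeff_zero_eq_one_of_mul_eq_X hf0 hf1 hu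
  have hπn : π (k * n + 1) = (k * n).factorial * coeff (k * n) (u ^ (k * n + 1)) := by
    simpa using hπ (k * n + 1) le_add_self
  rw [hπn, mul_assoc]
  rcases Nat.eq_zero_or_pos k with rfl | hk_pos
  · have hchoose : (Nat.choose 1 n : ℝ) ≤ 1 := by
      rcases n with _ | _ | n <;> simp [Nat.choose_eq_zero_of_lt]
    simpa [hu0] using hchoose
  · have hbound := choose_mul_coeff_pow_le_coeff_pow hupos hu0 hk_pos (k * n + 1) n
    have hchoose : 0 < (k * n + 1).choose n :=
      Nat.choose_pos ((Nat.le_mul_of_pos_left n hk_pos).trans (Nat.le_succ _))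
    refine ⟨by gcongr, ?_⟩
    exact mul_pos (by positivity) (lt_of_lt_of_le (by positivity) hbound)
end

section
/- Let φ(z) = 1 - a z + z² r(z) be a real power series with a > 0 and r having nonnegative coefficients, and suppose φ has a positive real root z₀ within its disc of convergence. Then there is a coefficient-wise inequality 1/φ(z) ≥ 1/(1 - z/z₀), i.e., the coefficient of z^k in 1/φ(z) is at least z₀^{-k} for all k ≥ 0. -/
/-!
Rescaling by `z₀` turns `φ` into `ψ(z) = φ(z₀ z)`, whose coefficients sum to `0` and are
nonnegative from degree `2` on. The coefficients of `χ = ψ / (1 - z)` are the partial sums of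
those of `ψ`, i.e. minus its tails, so `χ = 1 - (series with nonnegative coefficients)` and `1/χ`
has nonnegative coefficients. The coefficients of `1/ψ = (1/χ) / (1 - z)` are the partial sums of
those of `1/χ`, hence at least `(1/χ)(0) = 1`.
-/

open PowerSeries

theorem coeff_add_two_one_sub_C_mul_X_add_X_sq_mul {R : Type*} [CommRing R] (a : R) (r : R⟦X⟧)
    (n : ℕ) : coeff (n + 2) (1 - C a * X + X ^ 2 * r) = coeff n r := by
  simp [coeff_X_pow_mul, coeff_one]

theorem coeff_inv_nonneg_of_coeff_nonpos {k : Type*} [Field k] [LinearOrder k]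
    [IsStrictOrderedRing k] {χ : k⟦X⟧} (h0 : constantCoeff χ = 1)
    (hnonpos : ∀ n, n ≠ 0 → coeff n χ ≤ 0) (n : ℕ) : 0 ≤ coeff n χ⁻¹ := by
  induction n using Nat.strong_induction_on with
  | _ n ih =>
    rw [coeff_inv, h0, inv_one]
    split_ifs
    · exact zero_le_one
    rw [neg_one_mul, neg_nonneg]
    refine Finset.sum_nonpos fun x hx => ?_
    split_ifs with hlt
    · have hx1 : x.1 ≠ 0 := by rw [Finset.HasAntidiagonal.mem_antidiagonal] at hx; omega
      exact mul_nonpos_of_nonpos_of_nonneg (hnonpos _ hx1) (ih _ hlt)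
    · exact le_rfl

theorem coeff_mul_mk_one {R : Type*} [Semiring R] (f : R⟦X⟧) (n : ℕ) :
    coeff n (f * mk 1) = ∑ i ∈ Finset.range (n + 1), coeff i f := by
  simp [coeff_mul, Finset.Nat.sum_antidiagonal_eq_sum_range_succ_mk]

theorem rescale_inv {k : Type*} [Field k] (a : k) (φ : k⟦X⟧) :
    rescale a φ⁻¹ = (rescale a φ)⁻¹ := by
  have hc : constantCoeff (rescale a φ) = constantCoeff φ := by
    rw [← coeff_zero_eq_constantCoeff_apply, coeff_rescale]; simp
  by_cases h : constantCoeff φ = 0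
  · rw [PowerSeries.inv_eq_zero.mpr h, PowerSeries.inv_eq_zero.mpr (hc.trans h), map_zero]
  · rw [eq_inv_iff_mul_eq_one (hc ▸ h), ← map_mul, PowerSeries.inv_mul_cancel _ h, map_one]

theorem one_le_coeff_inv_of_hasSum_zero {ψ : ℝ⟦X⟧} (h0 : constantCoeff ψ = 1)
    (hnonneg : ∀ n, 2 ≤ n → 0 ≤ coeff n ψ) (hsum : HasSum (fun n => coeff n ψ) 0) (n : ℕ) :
    1 ≤ coeff n ψ⁻¹ := by
  set χ := ψ * mk 1
  have hχ_tail (m : ℕ) : coeff m χ = -∑' i, coeff (i + (m + 1)) ψ := by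
    rw [coeff_mul_mk_one, eq_neg_iff_add_eq_zero, hsum.summable.sum_add_tsum_nat_add,
      hsum.tsum_eq]
  have hχ0 : constantCoeff χ = 1 := by
    rw [← coeff_zero_eq_constantCoeff_apply, coeff_mul_mk_one]; simpa using h0
  have hχ_nonpos (m : ℕ) (hm : m ≠ 0) : coeff m χ ≤ 0 := by
    rw [hχ_tail, neg_nonpos]
    exact tsum_nonneg fun i => hnonneg _ (by omega)
  have hinv : ψ⁻¹ = χ⁻¹ * mk 1 := by
    rw [eq_comm, eq_inv_iff_mul_eq_one (by simp [h0]), mul_assoc, mul_comm (mk 1),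
      PowerSeries.inv_mul_cancel _ (by simp [hχ0])]
  rw [hinv, coeff_mul_mk_one]
  calc (1 : ℝ) = coeff 0 χ⁻¹ := by simp [hχ0]
    _ ≤ ∑ i ∈ Finset.range (n + 1), coeff i χ⁻¹ :=
      Finset.single_le_sum (fun i _ => coeff_inv_nonneg_of_coeff_nonpos hχ0 hχ_nonpos i)
        (by simp)

theorem inv_phi_coeff_lower_bound_general (a : ℝ)
    (r : PowerSeries ℝ) (hr : ∀ n, 0 ≤ coeff n r)
    (φ : PowerSeries ℝ) (hφ : φ = 1 - C a * X + X ^ 2 * r)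
    (z₀ : ℝ) (hz₀ : 0 < z₀)
    (hsum : Summable fun n => coeff n φ * z₀ ^ n)
    (hroot : ∑' n : ℕ, coeff n φ * z₀ ^ n = 0) :
    ∀ k : ℕ, (z₀⁻¹) ^ k ≤ coeff k φ⁻¹ := by
  set ψ := rescale z₀ φ
  have hψ0 : constantCoeff ψ = 1 := by
    rw [← coeff_zero_eq_constantCoeff_apply, coeff_rescale, hφ]; simp
  have hψ_nonneg (n : ℕ) (hn : 2 ≤ n) : 0 ≤ coeff n ψ := by
    obtain ⟨m, rfl⟩ := Nat.exists_eq_add_of_le' hn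
    rw [coeff_rescale, hφ, coeff_add_two_one_sub_C_mul_X_add_X_sq_mul]
    exact mul_nonneg (pow_nonneg hz₀.le _) (hr m)
  have hψ_sum : HasSum (fun n => coeff n ψ) 0 := by
    have h := hsum.hasSum
    rw [hroot] at h
    simpa only [ψ, coeff_rescale, mul_comm] using h
  intro k
  have hk := one_le_coeff_inv_of_hasSum_zero hψ0 hψ_nonneg hψ_sum k
  rw [← rescale_inv, coeff_rescale] at hk
  rwa [inv_pow, inv_le_iff_one_le_mul₀' (pow_pos hz₀ k)]

/-- Let `φ(z) = 1 - az + z²r(z)` with `a > 0` and `r` having nonnegative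
coefficients, and suppose `φ` has a positive real root `z₀` within its disc of
convergence (i.e. `Σ coeff_n(φ)·z₀ⁿ` converges to `0`). Then coefficient-wise
`1/φ(z) ≥ 1/(1 - z/z₀)`: the coefficient of `z^k` in `φ⁻¹` is at least `z₀^{-k}`. -/
theorem inv_phi_coeff_lower_bound (a : ℝ) (ha : 0 < a)
    (r : PowerSeries ℝ) (hr : ∀ n, 0 ≤ coeff n r)
    (φ : PowerSeries ℝ) (hφ : φ = 1 - C a * X + X ^ 2 * r)
    (z₀ : ℝ) (hz₀ : 0 < z₀)
    (hsum : Summable fun n => coeff n φ * z₀ ^ n)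
    (hroot : ∑' n : ℕ, coeff n φ * z₀ ^ n = 0) :
    ∀ k : ℕ, (z₀⁻¹) ^ k ≤ coeff k φ⁻¹ :=
  inv_phi_coeff_lower_bound_general a r hr φ hφ z₀ hz₀ hsum hroot
end

section
/- For a power series φ(z) = 1 - az + z²r(z) as above with positive root z₀, and any n ≥ 1, the coefficient of z^k in φ(z)^{-n} is at least binomial(n+k-1, k) · z₀^{-k}. -/
/-!
Since `φ(z₀) = 0` and all coefficients of `φ` past the linear one are nonnegative, each partial
sum `∑_{i ≤ k} φᵢ z₀ⁱ` with `k ≥ 1` is minus a nonnegative tail. So `ψ = φ · (1 - z/z₀)⁻¹` is `1`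
minus a series with nonnegative coefficients, whence `ψ⁻¹ ≥ 1` coefficientwise and
`φ⁻¹ = (1 - z/z₀)⁻¹ ψ⁻¹ ≥ (1 - z/z₀)⁻¹`. Raising to the `n`-th power preserves this order between
series with nonnegative coefficients, and `(1 - z/z₀)⁻ⁿ` has coefficients
`binomial(n+k-1, k) z₀⁻ᵏ`.
-/

open PowerSeries Finset

section CoeffLE

variable {R : Type*} [CommSemiring R] [PartialOrder R]

def CoeffLE (f g : R⟦X⟧) : Prop := ∀ n, coeff n f ≤ coeff n g

theorem CoeffLE.refl (f : R⟦X⟧) : CoeffLE f f := fun _ => le_rfl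

variable [IsOrderedRing R]

theorem CoeffLE.mul {f₁ f₂ g₁ g₂ : R⟦X⟧} (h₁ : CoeffLE f₁ g₁) (h₂ : CoeffLE f₂ g₂)
    (hf₂ : CoeffLE 0 f₂) (hg₁ : CoeffLE 0 g₁) : CoeffLE (f₁ * f₂) (g₁ * g₂) := fun n => by
  simp only [coeff_mul]
  refine sum_le_sum fun p _ => mul_le_mul (h₁ _) (h₂ _) ?_ ?_
  · simpa using hf₂ p.2
  · simpa using hg₁ p.1

theorem coeffLE_zero_one : CoeffLE (0 : R⟦X⟧) 1 := fun n => by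
  rw [coeff_one, map_zero]; split_ifs <;> simp

theorem CoeffLE.pow_nonneg {f : R⟦X⟧} (hf : CoeffLE 0 f) : ∀ n : ℕ, CoeffLE 0 (f ^ n)
  | 0 => coeffLE_zero_one
  | n + 1 => by
    simpa [pow_succ] using (hf.pow_nonneg n).mul hf (CoeffLE.refl 0) (hf.pow_nonneg n)

theorem CoeffLE.pow {f g : R⟦X⟧} (hf : CoeffLE 0 f) (h : CoeffLE f g) :
    ∀ n : ℕ, CoeffLE (f ^ n) (g ^ n)
  | 0 => CoeffLE.refl 1
  | n + 1 => by
    rw [pow_succ, pow_succ]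
    exact (CoeffLE.pow hf h n).mul h hf (CoeffLE.pow_nonneg (fun k => (hf k).trans (h k)) n)

end CoeffLE

theorem one_coeffLE_inv {K : Type*} [Field K] [LinearOrder K] [IsStrictOrderedRing K]
    {ψ : K⟦X⟧} (h₀ : constantCoeff ψ = 1) (hψ : ∀ n, n ≠ 0 → coeff n ψ ≤ 0) :
    CoeffLE 1 ψ⁻¹ := by
  have nonneg : ∀ k, 0 ≤ coeff k ψ⁻¹ := by
    intro k
    induction k using Nat.strong_induction_on with
    | _ k ih =>
    cases k with
    | zero => simp [h₀]
    | succ k =>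
      have h := congrArg (coeff (k + 1)) (PowerSeries.mul_inv_cancel ψ (by simp [h₀]))
      rw [coeff_mul, Nat.sum_antidiagonal_eq_sum_range_succ_mk, sum_range_succ'] at h
      simp only [coeff_zero_eq_constantCoeff, h₀, one_mul, Nat.sub_zero, coeff_one,
        Nat.succ_ne_zero, if_false] at h
      have higher_terms_nonpos :
          ∑ i ∈ range (k + 1), coeff (i + 1) ψ * coeff (k + 1 - (i + 1)) ψ⁻¹ ≤ 0 :=
        sum_nonpos fun i _ => mul_nonpos_of_nonpos_of_nonneg (hψ _ i.succ_ne_zero)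
          (ih _ (by omega))
      linarith
  intro k
  cases k with
  | zero => simp [h₀]
  | succ k => simpa [coeff_one] using nonneg (k + 1)

section Geometric

variable {R : Type*} [CommRing R]

/-- The expansion of `(1 - c z)⁻¹`. -/
noncomputable def geometric (c : R) : R⟦X⟧ := rescale c (mk 1)

theorem coeff_geometric (c : R) (n : ℕ) : coeff n (geometric c) = c ^ n := by
  simp [geometric, coeff_rescale]

theorem coeff_geometric_pow (c : R) (d k : ℕ) :
    coeff k (geometric c ^ (d + 1)) = (d + k).choose d * c ^ k := by
  rw [geometric, ← map_pow, mk_one_pow_eq_mk_choose_add, coeff_rescale, coeff_mk, mul_comm]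

theorem geometric_nonneg [PartialOrder R] [IsOrderedRing R] {c : R} (hc : 0 ≤ c) :
    CoeffLE 0 (geometric c) := fun n => by
  rw [map_zero, coeff_geometric]
  exact pow_nonneg hc n

end Geometric

theorem coeff_mul_geometric_inv_nonpos {φ : ℝ⟦X⟧} (hφ : ∀ n, 2 ≤ n → 0 ≤ coeff n φ)
    {z₀ : ℝ} (hz₀ : 0 < z₀) (hsum : Summable fun n => coeff n φ * z₀ ^ n)
    (hroot : ∑' n : ℕ, coeff n φ * z₀ ^ n = 0) {k : ℕ} (hk : k ≠ 0) :
    coeff k (φ * geometric z₀⁻¹) ≤ 0 := by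
  have partial_sum : z₀ ^ k * coeff k (φ * geometric z₀⁻¹) =
      ∑ i ∈ range (k + 1), coeff i φ * z₀ ^ i := by
    rw [coeff_mul, mul_sum,
      ← Nat.sum_antidiagonal_eq_sum_range_succ (fun i _ => coeff i φ * z₀ ^ i)]
    refine sum_congr rfl fun p hp => ?_
    rw [coeff_geometric, ← mem_antidiagonal.mp hp, pow_add, inv_pow]
    field_simp
  have tail_nonneg : 0 ≤ ∑' i, coeff (i + (k + 1)) φ * z₀ ^ (i + (k + 1)) :=
    tsum_nonneg fun i => mul_nonneg (hφ _ (by omega)) (by positivity)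
  have split := hsum.sum_add_tsum_nat_add (k + 1)
  refine nonpos_of_mul_nonpos_right (a := z₀ ^ k) ?_ (by positivity)
  linarith

theorem geometric_coeffLE_inv_of_root {φ : ℝ⟦X⟧} (h₀ : constantCoeff φ = 1)
    (hφ : ∀ n, 2 ≤ n → 0 ≤ coeff n φ) {z₀ : ℝ} (hz₀ : 0 < z₀)
    (hsum : Summable fun n => coeff n φ * z₀ ^ n) (hroot : ∑' n : ℕ, coeff n φ * z₀ ^ n = 0) :
    CoeffLE (geometric z₀⁻¹) φ⁻¹ := by
  set G := geometric z₀⁻¹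
  have hG₀ : constantCoeff G = 1 := by
    rw [← coeff_zero_eq_constantCoeff_apply, coeff_geometric, pow_zero]
  have hψ : CoeffLE 1 (φ * G)⁻¹ := one_coeffLE_inv (by simp [h₀, hG₀])
    fun k hk => coeff_mul_geometric_inv_nonpos hφ hz₀ hsum hroot hk
  have factor : φ⁻¹ = G * (φ * G)⁻¹ := by
    rw [PowerSeries.mul_inv_rev, ← mul_assoc, PowerSeries.mul_inv_cancel _ (by simp [hG₀]),
      one_mul]
  rw [factor]
  simpa using (CoeffLE.refl G).mul hψ coeffLE_zero_one (geometric_nonneg (by positivity))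

theorem inv_phi_pow_coeff_lower_bound_general (a : ℝ)
    (r : PowerSeries ℝ) (hr : ∀ n, 0 ≤ coeff n r)
    (φ : PowerSeries ℝ) (hφ : φ = 1 - C a * X + X ^ 2 * r)
    (z₀ : ℝ) (hz₀ : 0 < z₀)
    (hsum : Summable fun n => coeff n φ * z₀ ^ n)
    (hroot : ∑' n : ℕ, coeff n φ * z₀ ^ n = 0) :
    ∀ n k : ℕ, 1 ≤ n →
      ((n + k - 1).choose k : ℝ) * (z₀⁻¹) ^ k ≤ coeff k (φ⁻¹ ^ n) := by
  rintro n k hn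
  obtain ⟨d, rfl⟩ : ∃ d, n = d + 1 := ⟨n - 1, by omega⟩
  have h₀ : constantCoeff φ = 1 := by simp [hφ]
  have hφ₂ : ∀ n, 2 ≤ n → 0 ≤ coeff n φ := fun n hn => by
    obtain ⟨i, rfl⟩ : ∃ i, n = i + 2 := ⟨n - 2, by omega⟩
    simpa [hφ] using hr i
  have hpow := CoeffLE.pow (geometric_nonneg (by positivity))
    (geometric_coeffLE_inv_of_root h₀ hφ₂ hz₀ hsum hroot) (d + 1) k
  rwa [coeff_geometric_pow, Nat.choose_symm_add, show d + k = d + 1 + k - 1 by omega] at hpow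

/-- For `φ(z) = 1 - az + z²r(z)` with `a > 0`, `r` with nonnegative
coefficients, and a positive real root `z₀` of `φ` within the disc of convergence,
for every `n ≥ 1` the coefficient of `z^k` in `φ(z)^{-n}` is at least
`binomial(n+k-1, k) · z₀^{-k}`. -/
theorem inv_phi_pow_coeff_lower_bound (a : ℝ) (ha : 0 < a)
    (r : PowerSeries ℝ) (hr : ∀ n, 0 ≤ coeff n r)
    (φ : PowerSeries ℝ) (hφ : φ = 1 - C a * X + X ^ 2 * r)
    (z₀ : ℝ) (hz₀ : 0 < z₀)
    (hsum : Summable fun n => coeff n φ * z₀ ^ n)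
    (hroot : ∑' n : ℕ, coeff n φ * z₀ ^ n = 0) :
    ∀ n k : ℕ, 1 ≤ n →
      ((n + k - 1).choose k : ℝ) * (z₀⁻¹) ^ k ≤ coeff k (φ⁻¹ ^ n) :=
  inv_phi_pow_coeff_lower_bound_general a r hr φ hφ z₀ hz₀ hsum hroot
end

section
/- The formal power series y(z) with y(0) = 0 satisfying the algebraic equation y - y² + y³/6 = z (i.e., y is the compositional inverse of t - t² + t³/6) has all coefficients nonnegative. -/
/-!
Write `y = X u`; cancelling `X` from `y - y² + y³/6 = X` gives `u - X u² + X² u³/6 = 1`.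
Although this has a negative term, the auxiliary series `w = u - X u²/3` turns it into the system
`w = 1 + X (u²/6 + u w/2)`, `u = w + X u²/3` with nonnegative coefficients. Since every
right-hand side carries a factor `X`, the coefficients of `u` and `w` in degree `n` are
nonnegative combinations of products of lower coefficients, and induction on `n` concludes.
-/

open PowerSeries

namespace PowerSeries

variable {R : Type*} [CommSemiring R] [PartialOrder R]

def NonnegBelow (n : ℕ) (f : R⟦X⟧) : Prop :=
  ∀ k < n, 0 ≤ coeff k f

namespace NonnegBelow

variable {n : ℕ} {f g : R⟦X⟧}

theorem zero (f : R⟦X⟧) : NonnegBelow 0 f :=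
  fun _ hk => absurd hk (Nat.not_lt_zero _)

theorem X_mul (hf : NonnegBelow n f) : NonnegBelow (n + 1) (X * f) := by
  rintro (_ | k) hk
  · simp
  · simpa only [coeff_succ_X_mul] using hf k (Nat.lt_of_succ_lt_succ hk)

theorem C {a : R} (ha : 0 ≤ a) : NonnegBelow n (C a) := by
  intro k _
  rw [coeff_C]
  split_ifs <;> simp [ha]

variable [IsOrderedRing R]

theorem one : NonnegBelow n (1 : R⟦X⟧) := by
  simpa using NonnegBelow.C (n := n) (zero_le_one' R)

theorem add (hf : NonnegBelow n f) (hg : NonnegBelow n g) : NonnegBelow n (f + g) :=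
  fun k hk => by simpa only [map_add] using add_nonneg (hf k hk) (hg k hk)

theorem mul (hf : NonnegBelow n f) (hg : NonnegBelow n g) : NonnegBelow n (f * g) := by
  intro k hk
  rw [coeff_mul]
  refine Finset.sum_nonneg fun ij hij => mul_nonneg (hf _ ?_) (hg _ ?_) <;>
    have := Finset.HasAntidiagonal.mem_antidiagonal.mp hij <;> omega

theorem pow (hf : NonnegBelow n f) (m : ℕ) : NonnegBelow n (f ^ m) := by
  induction m with
  | zero => simpa using one
  | succ m ih => simpa only [pow_succ] using ih.mul hf

end NonnegBelow

variable [IsOrderedRing R]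

theorem nonnegBelow_of_eq_one_add_X_mul {u w : R⟦X⟧} {a b c : R}
    (ha : 0 ≤ a) (hb : 0 ≤ b) (hc : 0 ≤ c)
    (hw : w = 1 + X * (C a * u ^ 2 + C b * (u * w))) (hu : u = w + X * (C c * u ^ 2))
    (n : ℕ) : NonnegBelow n u ∧ NonnegBelow n w := by
  induction n with
  | zero => exact ⟨.zero u, .zero w⟩
  | succ n ih =>
    obtain ⟨hun, hwn⟩ := ih
    have hw' : NonnegBelow (n + 1) w := by
      rw [hw]
      exact NonnegBelow.one.add
        (((NonnegBelow.C ha).mul (hun.pow 2)).add ((NonnegBelow.C hb).mul (hun.mul hwn))).X_mul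
    refine ⟨?_, hw'⟩
    rw [hu]
    exact hw'.add ((NonnegBelow.C hc).mul (hun.pow 2)).X_mul

end PowerSeries

/-- The formal power series `y(z)` with `y(0) = 0` satisfying
`y - y² + y³/6 = z` (the generating series of the operad of 1-alia algebras,
the compositional inverse of `t - t² + t³/6`) has all coefficients nonnegative. -/
theorem alia_series_nonneg (y : PowerSeries ℚ)
    (h0 : constantCoeff y = 0)
    (heq : y - y ^ 2 + C (1 / 6 : ℚ) * y ^ 3 = X) :
    ∀ n : ℕ, 0 ≤ coeff n y := by
  obtain ⟨u, rfl⟩ := X_dvd_iff.mpr h0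
  have hu : u - X * u ^ 2 + C (1 / 6 : ℚ) * X ^ 2 * u ^ 3 = 1 :=
    mul_left_cancel₀ X_ne_zero (by linear_combination heq)
  have h6 : 6 * C (1 / 6 : ℚ) = 1 := by rw [← map_ofNat C 6, ← map_mul]; norm_num
  have h3 : C (1 / 3 : ℚ) = 2 * C (1 / 6 : ℚ) := by rw [← map_ofNat C 2, ← map_mul]; norm_num
  have h2 : C (1 / 2 : ℚ) = 3 * C (1 / 6 : ℚ) := by rw [← map_ofNat C 3, ← map_mul]; norm_num
  have hsys := nonnegBelow_of_eq_one_add_X_mul (u := u) (w := u - C (1 / 3 : ℚ) * X * u ^ 2)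
    (a := 1 / 6) (b := 1 / 2) (c := 1 / 3) (by norm_num) (by norm_num) (by norm_num)
    (by rw [h3, h2]; linear_combination hu + (C (1 / 6 : ℚ) * X ^ 2 * u ^ 3 - X * u ^ 2) * h6)
    (by ring)
  exact fun n => (hsys n).1.X_mul n (Nat.lt_succ_self n)
end

section
/- Let c, d be positive reals with d ≤ 3c²/8. Then the quadratic polynomial φ(z) = 1 - (c/2)z + (d/6)z² has a smallest positive real root z₁ = 3(c/2 - √(c²/4 - 2d/3))/d, and z/(z - (c/2)z² + (d/6)z³) = 1/φ(z) has nonnegative power series coefficients, each at least z₁^{-k}. -/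
/-!
Writing `φ(z) = (1 - r z)(1 - r' z)` with `r ≥ r' > 0` the roots of `t² - (c/2) t + d/6`
(real because `d ≤ 3c²/8`), the smallest positive root of `φ` is `z₁ = 1/r`, and
`1/φ = (∑ rⁱ zⁱ)(∑ r'ʲ zʲ)` has `k`-th coefficient `∑_{i+j=k} rⁱ r'ʲ ≥ rᵏ`.
-/

open PowerSeries

theorem PowerSeries.mk_pow_mul_one_sub_C_mul_X {R : Type*} [CommRing R] (r : R) :
    mk (r ^ ·) * (1 - C r * X) = 1 := by
  simpa [rescale_mk, rescale_X] using congrArg (rescale r) (mk_one_mul_one_sub_eq_one R)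

theorem PowerSeries.inv_one_sub_C_mul_X_mul_one_sub_C_mul_X {k : Type*} [Field k] (r r' : k) :
    ((1 - C r * X) * (1 - C r' * X))⁻¹ = mk (r ^ ·) * mk (r' ^ ·) := by
  rw [inv_eq_iff_mul_eq_one (by simp)]
  calc mk (r ^ ·) * mk (r' ^ ·) * ((1 - C r * X) * (1 - C r' * X))
      = (mk (r ^ ·) * (1 - C r * X)) * (mk (r' ^ ·) * (1 - C r' * X)) := by ring
    _ = 1 := by rw [mk_pow_mul_one_sub_C_mul_X, mk_pow_mul_one_sub_C_mul_X, one_mul]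

theorem PowerSeries.pow_le_coeff_mk_pow_mul_mk_pow {R : Type*} [CommRing R] [PartialOrder R]
    [IsOrderedRing R] {r r' : R} (hr : 0 ≤ r) (hr' : 0 ≤ r') (k : ℕ) :
    r ^ k ≤ coeff k (mk (r ^ ·) * mk (r' ^ ·)) := by
  simp only [coeff_mul, coeff_mk]
  have hk : (k, 0) ∈ Finset.HasAntidiagonal.antidiagonal k := by simp
  simpa using Finset.single_le_sum (f := fun p : ℕ × ℕ => r ^ p.1 * r' ^ p.2)
    (fun p _ => by positivity) hk

theorem inv_le_of_one_sub_mul_mul_one_sub_mul_eq_zero {r r' z : ℝ} (hr : 0 < r) (hr'r : r' ≤ r)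
    (hz : 0 < z) (h : (1 - r * z) * (1 - r' * z) = 0) : r⁻¹ ≤ z := by
  rw [inv_le_iff_one_le_mul₀' hr]
  rcases mul_eq_zero.1 h with h | h <;> nlinarith

theorem exists_roots_of_sq_sub_four_mul_nonneg {a b : ℝ} (ha : 0 < a) (hb : 0 < b)
    (hD : 4 * b ≤ a ^ 2) :
    ∃ r r' : ℝ, 0 < r' ∧ r' ≤ r ∧ r + r' = a ∧ r * r' = b ∧
      (a - √(a ^ 2 - 4 * b)) / (2 * b) = r⁻¹ := by
  set s := √(a ^ 2 - 4 * b)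
  have hs : s ^ 2 = a ^ 2 - 4 * b := Real.sq_sqrt (by linarith)
  have hs0 : 0 ≤ s := Real.sqrt_nonneg _
  have hsa : s < a := by nlinarith
  refine ⟨(a + s) / 2, (a - s) / 2, by linarith, by linarith, by ring,
    by linear_combination (-1 / 4 : ℝ) * hs, ?_⟩
  refine eq_inv_of_mul_eq_one_left ?_
  field_simp
  linear_combination -hs

/-- For positive reals `c, d` with `d ≤ 3c²/8`, the quadratic
`φ(z) = 1 - (c/2)z + (d/6)z²` has smallest positive real root
`z₁ = 3(c/2 - √(c²/4 - 2d/3))/d`, and `z/(z - (c/2)z² + (d/6)z³) = 1/φ(z)` has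
power series coefficients that are each at least `z₁^{-k}` (in particular
nonnegative). -/
theorem quadratic_phi_root_and_inverse_bound (c d : ℝ)
    (hc : 0 < c) (hd : 0 < d) (hcd : d ≤ 3 * c ^ 2 / 8)
    (z₁ : ℝ) (hz₁ : z₁ = 3 * (c / 2 - Real.sqrt (c ^ 2 / 4 - 2 * d / 3)) / d)
    (φ : PowerSeries ℝ) (hφ : φ = 1 - C (c / 2) * X + C (d / 6) * X ^ 2) :
    0 < z₁ ∧
    1 - c / 2 * z₁ + d / 6 * z₁ ^ 2 = 0 ∧
    (∀ z : ℝ, 0 < z → 1 - c / 2 * z + d / 6 * z ^ 2 = 0 → z₁ ≤ z) ∧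
    (X - C (c / 2) * X ^ 2 + C (d / 6) * X ^ 3) * φ⁻¹ = X ∧
    (∀ k : ℕ, (z₁⁻¹) ^ k ≤ coeff k φ⁻¹) := by
  obtain ⟨r, r', hr', hr'r, hsum, hprod, hroot⟩ :=
    exists_roots_of_sq_sub_four_mul_nonneg (a := c / 2) (b := d / 6) (by positivity)
      (by positivity) (by linarith)
  have hr : 0 < r := hr'.trans_le hr'r
  obtain rfl : z₁ = r⁻¹ := by
    rw [hz₁, ← hroot]
    field_simp
    ring_nf
  have hquad (z : ℝ) : 1 - c / 2 * z + d / 6 * z ^ 2 = (1 - r * z) * (1 - r' * z) := by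
    rw [← hsum, ← hprod]; ring
  have hfactor : φ = (1 - C r * X) * (1 - C r' * X) := by
    rw [hφ, ← hsum, ← hprod, map_add, map_mul]; ring
  refine ⟨inv_pos.2 hr, by rw [hquad, mul_inv_cancel₀ hr.ne']; ring,
    fun z hz h => inv_le_of_one_sub_mul_mul_one_sub_mul_eq_zero hr hr'r hz (hquad z ▸ h),
    ?_, ?_⟩
  · have hφ0 : constantCoeff φ ≠ 0 := by simp [hfactor]
    rw [show X - C (c / 2) * X ^ 2 + C (d / 6) * X ^ 3 = X * φ by rw [hφ]; ring, mul_assoc,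
      PowerSeries.mul_inv_cancel φ hφ0, mul_one]
  · intro k
    rw [inv_inv, hfactor, inv_one_sub_C_mul_X_mul_one_sub_C_mul_X]
    exact pow_le_coeff_mk_pow_mul_mk_pow hr.le hr'.le k
end
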